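/- arXiv:1703.07404 — 6 statements merged into one kernel-verified Lean document; each statement's English description precedes it below -/
import Mathlib

section
/- Fundamental lemma on vertical vector fields: let (E,d,ρ) be a resolution of a Hermann foliation (the complex ···→Γ(E_{-2})→Γ(E_{-1})→𝒟→0 is exact), and consider the complex of vertical vector fields of arity n with differential X↦[Q⁽⁰⁾,X]. Then (1) every root-free cocycle (cocycle with vanishing component of depth 1, i.e. no component in Γ(S^{n+1}(E*)⊗E_{-1})) is a coboundary; (2) every cocycle whose depth-1 component lies in the kernel of id⊗ρ is a coboundary. -/
/-!
Exactness of the horizontal lines lets one solve `∂Y = X` depth by depth. Choose `Y 1` with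
`h Y₁ = X 0` (possible as soon as `X 0 ∈ range h₀`, in particular when `X 0 = 0`, or when
`r (X 0) = 0` because `range h₀ = ker r`), and `Y 0 = 0`. If `h Y_{p+1} = X p - v Y_p`, the
cocycle condition together with `v² = 0` and `hv = -vh` shows that `X (p+1) - v Y_{p+1}` is
`h`-closed, hence `h`-exact, which produces `Y_{p+2}`.
-/

section TotalPrimitive

variable {R : Type*} [CommRing R] {C : ℕ → Type*} [∀ p, AddCommGroup (C p)]
  [∀ p, Module R (C p)] {h : ∀ p, C (p + 1) →ₗ[R] C p} {v : ∀ p, C p →ₗ[R] C p}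
  {X : ∀ p, C p}

theorem sub_map_mem_ker_of_primitive
    (hv : ∀ (p : ℕ) (x : C p), v p (v p x) = 0)
    (hanti : ∀ (p : ℕ) (x : C (p + 1)), h p (v (p + 1) x) = - v p (h p x))
    (hcocycle : ∀ p, v p (X p) + h p (X (p + 1)) = 0)
    {p : ℕ} {y : C p} {y' : C (p + 1)} (hy' : h p y' = X p - v p y) :
    X (p + 1) - v (p + 1) y' ∈ LinearMap.ker (h p) := by
  have hX : h p (X (p + 1)) = - v p (X p) := eq_neg_of_add_eq_zero_right (hcocycle p)
  rw [LinearMap.mem_ker, map_sub, hX, hanti, hy', map_sub, hv]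
  abel

theorem exists_total_primitive_of_mem_range
    (hv : ∀ (p : ℕ) (x : C p), v p (v p x) = 0)
    (hanti : ∀ (p : ℕ) (x : C (p + 1)), h p (v (p + 1) x) = - v p (h p x))
    (hex : ∀ p, LinearMap.range (h (p + 1)) = LinearMap.ker (h p))
    (hcocycle : ∀ p, v p (X p) + h p (X (p + 1)) = 0)
    (hX₀ : X 0 ∈ LinearMap.range (h 0)) :
    ∃ Y : ∀ p, C p, ∀ p, v p (Y p) + h p (Y (p + 1)) = X p := by
  obtain ⟨y₁, hy₁⟩ := hX₀
  have extend : ∀ p (y : C p) (y' : C (p + 1)), h p y' = X p - v p y →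
      ∃ y'' : C (p + 2), h (p + 1) y'' = X (p + 1) - v (p + 1) y' := fun p _ _ hy' => by
    rw [← LinearMap.mem_range, hex]
    exact sub_map_mem_ker_of_primitive hv hanti hcocycle hy'
  choose next hnext using extend
  let primitive : ∀ p, {yy : C p × C (p + 1) // h p yy.2 = X p - v p yy.1} := fun p =>
    Nat.rec (motive := fun p => {yy : C p × C (p + 1) // h p yy.2 = X p - v p yy.1})
      ⟨(0, y₁), by simp [hy₁]⟩
      (fun p yy => ⟨(yy.1.2, next p yy.1.1 yy.1.2 yy.2), hnext _ _ _ _⟩) p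
  refine ⟨fun p => (primitive p).1.1, fun p => ?_⟩
  change v p (primitive p).1.1 + h p (primitive p).1.2 = X p
  rw [(primitive p).2]
  abel

end TotalPrimitive

/-- Fundamental lemma on vertical vector fields.  Let `(E, d, ρ)` be a resolution of a
Hermann foliation `𝒟`, i.e. the complex `⋯ → Γ(E_{-2}) → Γ(E_{-1}) → 𝒟 → 0` is exact.
Vertical vector fields of arity `n` are (formal sums of) elements of the bicomplex with
components `C p = Γ(S^{n+1}(E*) ⊗ E_{-(p+1)})` of depth `p+1`; the differential
`X ↦ [Q⁰, X]` is the total differential `(∂X)_p = v_p(X_p) + h_p(X_{p+1})`, where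
`h = id⊗d` is the (exact, except in depth 1) horizontal differential, `v = Q⁰⊗id` the
vertical one (`v² = 0`, `h` and `v` anticommute), and `r = id⊗ρ` in depth 1.

Then (1) every root-free cocycle `X` (i.e. with vanishing depth-1 component `X 0`) is a
coboundary, and (2) every cocycle whose depth-1 component lies in the kernel of `id⊗ρ`
is a coboundary. -/
theorem stmt10 {R D : Type*} [CommRing R] [AddCommGroup D] [Module R D]
    (C : ℕ → Type*) [∀ p, AddCommGroup (C p)] [∀ p, Module R (C p)]
    (h : ∀ p, C (p + 1) →ₗ[R] C p)
    (v : ∀ p, C p →ₗ[R] C p)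
    (r : C 0 →ₗ[R] D)
    (hv : ∀ (p : ℕ) (x : C p), v p (v p x) = 0)
    (hanti : ∀ (p : ℕ) (x : C (p + 1)), h p (v (p + 1) x) = - v p (h p x))
    (hex0 : LinearMap.range (h 0) = LinearMap.ker r)
    (hex : ∀ p, LinearMap.range (h (p + 1)) = LinearMap.ker (h p))
    (X : ∀ p, C p)
    (hcocycle : ∀ p, v p (X p) + h p (X (p + 1)) = 0) :
    (X 0 = 0 → ∃ Y : ∀ p, C p, ∀ p, v p (Y p) + h p (Y (p + 1)) = X p) ∧
    (r (X 0) = 0 → ∃ Y : ∀ p, C p, ∀ p, v p (Y p) + h p (Y (p + 1)) = X p) := by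
  have coboundary := exists_total_primitive_of_mem_range hv hanti hex hcocycle
  refine ⟨fun hX₀ => coboundary ?_, fun hX₀ => coboundary ?_⟩
  · rw [hX₀]
    exact zero_mem _
  · rwa [hex0]
end

section
/- Every finitely generated Hermann foliation 𝒟 on a manifold M is the image under the anchor map of an almost-Lie algebroid structure on a trivial vector bundle: if X₁,…,X_r generate 𝒟 and [X_i,X_j]=Σ_k c^k_{ij}X_k with c^k_{ij}=−c^k_{ji} smooth, then the trivial bundle ℝʳ×M with ρ(e_i)=X_i and [e_i,e_j]=Σ_k c^k_{ij}e_k (extended by Leibniz) is an almost-Lie algebroid with ρ(Γ(A))=𝒟. -/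
/-!
The anchor `ρ(a) = Σ aᵢ Xᵢ` and the bracket `⁅a, b⁆ = Σ aᵢ bⱼ cᵢⱼ + ρ(a) b - ρ(b) a` are skew
and Leibniz by inspection. The anchor condition is the real point: because of the Leibniz rule
on both sides, the defect `ρ⁅a, b⁆ - ⁅ρ a, ρ b⁆` is `𝒪(M)`-bilinear, so it suffices to check it
on the basis `eᵢ`, where it is the hypothesis `⁅Xᵢ, Xⱼ⁆ = Σ cᵏᵢⱼ Xₖ`.
-/

namespace Derivation

variable {k R : Type*} [CommRing k] [CommRing R] [Algebra k R]

theorem lie_smul_right (D E : Derivation k R R) (f : R) :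
    ⁅D, f • E⁆ = f • ⁅D, E⁆ + D f • E := by
  ext x
  simp only [commutator_apply, add_apply, smul_apply, smul_eq_mul, leibniz]
  ring

end Derivation

section AnchorDefect

variable {k R A ι : Type*} [CommRing k] [CommRing R] [Algebra k R]
  [AddCommGroup A] [Module R A]

theorem anchor_bracket_eq_lie_of_basis (e : Module.Basis ι R A) (ρ : A →ₗ[R] Derivation k R R)
    (β : A → A → A) (hadd : ∀ a b b', β a (b + b') = β a b + β a b')
    (hskew : ∀ a b, β a b = -β b a)
    (hleib : ∀ a b (f : R), β a (f • b) = f • β a b + ρ a f • b)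
    (hbasis : ∀ i j, ρ (β (e i) (e j)) = ⁅ρ (e i), ρ (e j)⁆) (a b : A) :
    ρ (β a b) = ⁅ρ a, ρ b⁆ := by
  let defect : A → A →ₗ[R] Derivation k R R := fun a =>
    { toFun := fun b => ρ (β a b) - ⁅ρ a, ρ b⁆
      map_add' := fun b b' => by
        simp only [hadd, map_add, lie_add]
        abel
      map_smul' := fun f b => by
        simp only [hleib, map_add, map_smul, Derivation.lie_smul_right, RingHom.id_apply,
          smul_sub]
        abel }
  have defect_swap : ∀ a b, defect a b = -defect b a := fun a b => by
    simp only [defect, LinearMap.coe_mk, AddHom.coe_mk, neg_sub]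
    rw [hskew, map_neg, ← lie_skew]
    abel
  have defect_basis : ∀ j, defect (e j) = 0 := fun j =>
    e.ext fun i => by
      rw [defect_swap, LinearMap.zero_apply, neg_eq_zero]
      exact sub_eq_zero.mpr (hbasis i j)
  have : defect a = 0 := e.ext fun j => by
    rw [defect_swap, defect_basis, LinearMap.zero_apply, neg_zero, LinearMap.zero_apply]
  exact sub_eq_zero.mp (LinearMap.congr_fun this b)

end AnchorDefect

section TrivialBundle

variable {k R ι : Type*} [CommRing k] [CommRing R] [Algebra k R] [Fintype ι]
  (X : ι → Derivation k R R) (c : ι → ι → ι → R)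

def structureBracket (a b : ι → R) : ι → R :=
  ∑ i, ∑ j, (a i * b j) • c i j
    + (fun l => Fintype.linearCombination R X a (b l))
    - (fun l => Fintype.linearCombination R X b (a l))

theorem structureBracket_single_single [DecidableEq ι] (i j : ι) :
    structureBracket X c (Pi.single i 1) (Pi.single j 1) = c i j := by
  have kills_single : ∀ (D : Derivation k R R) (i l : ι), D ((Pi.single i 1 : ι → R) l) = 0 :=
    fun D i l => by
      rcases eq_or_ne l i with rfl | h
      · simp
      · simp [h]
  ext l
  simp only [structureBracket, Pi.add_apply, Pi.sub_apply, kills_single, add_zero, sub_zero]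
  simp [Pi.single_apply, ite_apply]

theorem structureBracket_add_right (a b b' : ι → R) :
    structureBracket X c a (b + b') = structureBracket X c a b + structureBracket X c a b' := by
  ext l
  simp only [structureBracket, Pi.add_apply, Pi.sub_apply, map_add, Derivation.add_apply,
    mul_add, add_smul, Finset.sum_add_distrib, Finset.sum_apply, Pi.smul_apply, smul_eq_mul]
  ring

theorem structureBracket_skew (hskew : ∀ i j, c i j = -c j i) (a b : ι → R) :
    structureBracket X c a b = -structureBracket X c b a := by
  have : ∑ i, ∑ j, (a i * b j) • c i j = -∑ i, ∑ j, (b i * a j) • c i j := by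
    rw [Finset.sum_comm, ← Finset.sum_neg_distrib]
    refine Finset.sum_congr rfl fun j _ => ?_
    rw [← Finset.sum_neg_distrib]
    refine Finset.sum_congr rfl fun i _ => ?_
    rw [hskew, smul_neg, mul_comm]
  rw [structureBracket, structureBracket, this]
  abel

theorem structureBracket_smul_right (a b : ι → R) (f : R) :
    structureBracket X c a (f • b) =
      f • structureBracket X c a b + Fintype.linearCombination R X a f • b := by
  ext l
  simp only [structureBracket, Pi.add_apply, Pi.sub_apply, Pi.smul_apply, smul_eq_mul,
    map_smul, Derivation.smul_apply, Derivation.leibniz, Finset.sum_apply]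
  have hsum : ∑ i, ∑ j, a i * (f * b j) * c i j l = f * ∑ i, ∑ j, a i * b j * c i j l := by
    simp only [Finset.mul_sum]
    exact Finset.sum_congr rfl fun i _ => Finset.sum_congr rfl fun j _ => by ring
  rw [hsum]
  ring

end TrivialBundle

/-- Every finitely generated Hermann foliation `𝒟` on a manifold `M` is the image under
the anchor map of an almost-Lie algebroid structure on a trivial vector bundle: if
`X₁, …, X_r` generate `𝒟` and `[Xᵢ, Xⱼ] = Σ_k c^k_{ij} X_k` with `c^k_{ij} = −c^k_{ji}`
smooth functions, then the trivial bundle `ℝʳ × M` (whose sections form the free module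
`Fin r → R` over `R = 𝒪(M)`) with `ρ(eᵢ) = Xᵢ` and `[eᵢ, eⱼ] = Σ_k c^k_{ij} e_k`,
extended by `R`-linearity and the Leibniz rule, is an almost-Lie algebroid (skew bracket,
Leibniz rule, anchor-morphism condition) with `ρ(Γ(A)) = 𝒟 = span(X₁, …, X_r)`. -/
theorem stmt12 {k R : Type*} [Field k] [CommRing R] [Algebra k R]
    (r : ℕ) (X : Fin r → Derivation k R R)
    (c : Fin r → Fin r → Fin r → R)
    (hskew : ∀ i j l, c i j l = - c j i l)
    (hbr : ∀ i j, ⁅X i, X j⁆ = ∑ l, c i j l • X l) :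
    ∃ (ρ : (Fin r → R) →ₗ[R] Derivation k R R)
      (β : (Fin r → R) → (Fin r → R) → (Fin r → R)),
      (∀ i, ρ (Pi.single i 1) = X i) ∧
      (∀ i j, β (Pi.single i 1) (Pi.single j 1)
        = ∑ l, c i j l • (Pi.single l 1 : Fin r → R)) ∧
      (∀ a b, β a b = - β b a) ∧
      (∀ (a b : Fin r → R) (f : R), β a (f • b) = f • β a b + ρ a f • b) ∧
      (∀ a b, ρ (β a b) = ⁅ρ a, ρ b⁆) ∧
      LinearMap.range ρ = Submodule.span R (Set.range X) := by
  have hskew' : ∀ i j, c i j = -c j i := fun i j => funext (hskew i j)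
  refine ⟨Fintype.linearCombination R X, structureBracket X c, fun i => by simp,
    fun i j => by rw [structureBracket_single_single, ← pi_eq_sum_univ'],
    structureBracket_skew X c hskew', structureBracket_smul_right X c, ?_,
    Fintype.range_linearCombination R X⟩
  refine anchor_bracket_eq_lie_of_basis (Pi.basisFun R (Fin r)) _ _
    (structureBracket_add_right X c) (structureBracket_skew X c hskew')
    (structureBracket_smul_right X c) fun i j => ?_
  simp only [Pi.basisFun_apply, structureBracket_single_single,
    Fintype.linearCombination_apply_single, one_smul, hbr]
  exact Fintype.linearCombination_apply R X (c i j)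
end

section
/- On M = ℝ, the ideal of smooth real-valued functions vanishing identically on the interval [0,1] is not finitely generated as a C∞(ℝ)-module. -/
/-!
If smooth `g₁, …, g_k` generated the ideal, every `f = ∑ aᵢ gᵢ` in it would satisfy
`|f| ≤ A ∑ |gᵢ|` on `[1, 2]`. But each `gᵢ` is flat at `1`, so `m = e^{-1/(x-1)} + ∑ |gᵢ|`,
which is positive on `(1, ∞)`, decays at `xₙ = 1 + 2⁻ⁿ` faster than any power of `2⁻ⁿ`. A series
of bumps of width `2⁻ⁿ` centred at `xₙ` with heights `2ⁿ m(xₙ)` then converges in every `C^k`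
norm to a smooth `f` vanishing on `(-∞, 1]` with `f(xₙ) ≥ 2ⁿ m(xₙ) > A ∑ |gᵢ(xₙ)|` once `2ⁿ > A`.
-/

open Set Filter Asymptotics
open scoped ContDiff

theorem deriv_eqOn_zero_of_eqOn_zero {g : ℝ → ℝ} (hg : ContDiff ℝ 1 g) {a b : ℝ} (hab : a < b)
    (h0 : EqOn g 0 (Icc a b)) : EqOn (deriv g) 0 (Icc a b) := by
  have hIoo : EqOn (deriv g) 0 (Ioo a b) := fun x hx => by
    have hloc : g =ᶠ[nhds x] fun _ => 0 :=
      eventually_of_mem (isOpen_Ioo.mem_nhds hx) fun y hy => h0 (Ioo_subset_Icc_self hy)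
    simpa using hloc.deriv_eq
  exact hIoo.of_subset_closure (hg.continuous_deriv le_rfl).continuousOn continuousOn_const
    Ioo_subset_Icc_self (closure_Ioo hab.ne).superset

theorem exists_abs_le_mul_pow_of_eqOn_zero {g : ℝ → ℝ} (hg : ContDiff ℝ ∞ g) {a b : ℝ}
    (hab : a < b) (h0 : EqOn g 0 (Icc a b)) (d : ℝ) (N : ℕ) :
    ∃ C, ∀ x ∈ Icc b d, |g x| ≤ C * (x - b) ^ N := by
  induction N generalizing g with
  | zero => simpa using isCompact_Icc.exists_bound_of_continuousOn hg.continuous.continuousOn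
  | succ N ih =>
    obtain ⟨C, hC⟩ := ih (contDiff_infty_iff_deriv.1 hg).2
      (deriv_eqOn_zero_of_eqOn_zero (hg.of_le (by exact_mod_cast le_top)) hab h0)
    refine ⟨|C|, fun x hx => ?_⟩
    have hmvt := norm_image_sub_le_of_norm_deriv_le_segment' (f := g) (C := |C| * (x - b) ^ N)
      (fun y _ => (hg.differentiable (by simp) y).hasDerivAt.hasDerivWithinAt)
      (fun y hy => (hC y ⟨hy.1, hy.2.le.trans hx.2⟩).trans <|
        mul_le_mul (le_abs_self C) (pow_le_pow_left₀ (sub_nonneg.2 hy.1) (by linarith [hy.2]) N)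
          (by have := hy.1; positivity) (abs_nonneg C)) x ⟨hx.1, le_rfl⟩
    rw [h0 ⟨hab.le, le_rfl⟩, Pi.zero_apply, sub_zero, Real.norm_eq_abs] at hmvt
    rwa [pow_succ, ← mul_assoc]

theorem add_two_inv_pow_mem_Icc (b : ℝ) (n : ℕ) : b + 2⁻¹ ^ n ∈ Icc b (b + 1) :=
  ⟨by simp [pow_nonneg], by simpa using pow_le_one₀ (by norm_num : (0 : ℝ) ≤ 2⁻¹) (by norm_num)⟩

theorem superpolynomialDecay_two_pow_of_eqOn_zero {g : ℝ → ℝ} (hg : ContDiff ℝ ∞ g) {a b : ℝ}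
    (hab : a < b) (h0 : EqOn g 0 (Icc a b)) :
    SuperpolynomialDecay atTop (fun n : ℕ => (2 : ℝ) ^ n) fun n => g (b + 2⁻¹ ^ n) := by
  rw [superpolynomialDecay_iff_abs_isBoundedUnder _ (tendsto_pow_atTop_atTop_of_one_lt one_lt_two)]
  intro N
  obtain ⟨C, hC⟩ := exists_abs_le_mul_pow_of_eqOn_zero hg hab h0 (b + 1) N
  refine isBoundedUnder_of ⟨C, fun n => ?_⟩
  calc |(2 ^ n) ^ N * g (b + 2⁻¹ ^ n)| = (2 ^ n) ^ N * |g (b + 2⁻¹ ^ n)| := by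
        rw [abs_mul, abs_of_pos (by positivity)]
    _ ≤ (2 ^ n) ^ N * (C * (2⁻¹ ^ n) ^ N) := by
        gcongr; simpa using hC _ (add_two_inv_pow_mem_Icc b n)
    _ = C := by rw [mul_left_comm, ← mul_pow, ← mul_pow]; norm_num

theorem Asymptotics.SuperpolynomialDecay.sum {α β ι : Type*} [TopologicalSpace β]
    [CommSemiring β] [ContinuousAdd β] {l : Filter α} {k : α → β} (s : Finset ι)
    {f : ι → α → β} (hf : ∀ i ∈ s, SuperpolynomialDecay l k (f i)) :
    SuperpolynomialDecay l k fun a => ∑ i ∈ s, f i a := fun z => by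
  simpa [Finset.mul_sum] using tendsto_finsetSum s fun i hi => hf i hi z

theorem Asymptotics.SuperpolynomialDecay.summable {k c : ℕ → ℝ}
    (hc : SuperpolynomialDecay atTop k c) (hk : Tendsto k atTop atTop)
    (hk' : Summable fun n => (k n)⁻¹) : Summable c :=
  summable_of_isBigO_nat hk' <| by simpa using (superpolynomialDecay_iff_isBigO c hk).1 hc (-1)

theorem abs_iteratedDeriv_comp_mul_sub_le {ψ : ℝ → ℝ} (hψ : ContDiff ℝ ∞ ψ) {k : ℕ} {M : ℝ}
    (hM : ∀ y, |iteratedDeriv k ψ y| ≤ M) (r p x : ℝ) :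
    |iteratedDeriv k (fun x => ψ (r * (x - p))) x| ≤ |r| ^ k * M := by
  rw [iteratedDeriv_comp_sub_const (f := fun y => ψ (r * y)),
    iteratedDeriv_comp_const_mul (hψ.of_le (by exact_mod_cast le_top)), abs_mul, abs_pow]
  gcongr
  exact hM _

theorem exists_contDiff_eq_zero_Iic_and_le_apply {c : ℕ → ℝ} (hc0 : ∀ n, 0 ≤ c n)
    (hc : SuperpolynomialDecay atTop (fun n : ℕ => (2 : ℝ) ^ n) c) (b : ℝ) :
    ∃ f : ℝ → ℝ, ContDiff ℝ ∞ f ∧ (∀ x ≤ b, f x = 0) ∧ ∀ n, c n ≤ f (b + 2⁻¹ ^ n) := by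
  let ψ : ContDiffBump (0 : ℝ) := ⟨1 / 2, 1, by norm_num, by norm_num⟩
  set term : ℕ → ℝ → ℝ := fun n x => c n * ψ (2 ^ n * (x - (b + 2⁻¹ ^ n))) with hterm_def
  have hψ : ∀ k, ∃ M, ∀ y, |iteratedDeriv k ψ y| ≤ M := fun k => by
    simpa [norm_iteratedFDeriv_eq_norm_iteratedDeriv] using
      (ψ.contDiff.continuous_iteratedFDeriv (by exact_mod_cast le_top)
        ).bounded_above_of_compact_support (ψ.hasCompactSupport.iteratedFDeriv k)
  choose M hM using hψ
  have hterm : ∀ n, ContDiff ℝ ∞ (term n) := fun n =>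
    contDiff_const.mul (ψ.contDiff.comp (contDiff_const.mul (contDiff_id.sub contDiff_const)))
  have hbound : ∀ k n x, ‖iteratedFDeriv ℝ k (term n) x‖ ≤ M k * ((2 ^ n) ^ k * c n) := by
    intro k n x
    rw [norm_iteratedFDeriv_eq_norm_iteratedDeriv, hterm_def, iteratedDeriv_const_mul_field,
      Real.norm_eq_abs, abs_mul, abs_of_nonneg (hc0 n)]
    have hψk := abs_iteratedDeriv_comp_mul_sub_le ψ.contDiff (hM k) (2 ^ n) (b + 2⁻¹ ^ n) x
    rw [abs_of_pos (by positivity : (0 : ℝ) < 2 ^ n)] at hψk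
    calc c n * |iteratedDeriv k (fun x => ψ (2 ^ n * (x - (b + 2⁻¹ ^ n)))) x|
        ≤ c n * ((2 ^ n) ^ k * M k) := mul_le_mul_of_nonneg_left hψk (hc0 n)
      _ = M k * ((2 ^ n) ^ k * c n) := by ring
  have hsum : ∀ k, Summable fun n => M k * ((2 ^ n) ^ k * c n) := fun k =>
    ((hc.param_pow_mul k).summable (tendsto_pow_atTop_atTop_of_one_lt one_lt_two)
      (by simpa [inv_pow] using summable_geometric_two)).mul_left _
  refine ⟨fun x => ∑' n, term n x, contDiff_tsum hterm (fun k _ => hsum k)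
    (fun k n x _ => hbound k n x), fun x hx => ?_, fun n => ?_⟩
  · have hvanish : ∀ n, term n x = 0 := fun n => by
      have hscale : (2 : ℝ) ^ n * 2⁻¹ ^ n = 1 := by rw [← mul_pow]; norm_num
      have hfar : 2 ^ n * (x - (b + 2⁻¹ ^ n)) ≤ -1 := by
        nlinarith [pow_pos (two_pos : (0 : ℝ) < 2) n]
      simp only [hterm_def]
      rw [ψ.zero_of_le_dist (by
        rw [Real.dist_0_eq_abs]; exact (le_neg.1 hfar).trans (neg_le_abs _)), mul_zero]
    simp [hvanish]
  · have hsumx : Summable fun m => term m (b + 2⁻¹ ^ n) :=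
      (hsum 0).of_norm_bounded fun m => by simpa using hbound 0 m (b + 2⁻¹ ^ n)
    have hn : term n (b + 2⁻¹ ^ n) = c n := by
      simp [hterm_def, ψ.one_of_mem_closedBall (Metric.mem_closedBall_self ψ.rIn_pos.le)]
    exact hn ▸ hsumx.le_tsum n fun m _ => mul_nonneg (hc0 m) ψ.nonneg

theorem IsCompact.exists_abs_sum_mul_le {X ι : Type*} [TopologicalSpace X] {K : Set X}
    (hK : IsCompact K) (s : Finset ι) {a : ι → X → ℝ} (ha : ∀ i ∈ s, ContinuousOn (a i) K)
    (g : ι → X → ℝ) : ∃ A, ∀ x ∈ K, |∑ i ∈ s, a i x * g i x| ≤ A * ∑ i ∈ s, |g i x| := by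
  obtain ⟨A, hA⟩ := hK.exists_bound_of_continuousOn (f := fun x => ∑ i ∈ s, |a i x|)
    (continuousOn_finsetSum s fun i hi => (ha i hi).abs)
  refine ⟨A, fun x hx => ?_⟩
  have hai : ∀ i ∈ s, |a i x| ≤ A := fun i hi =>
    (Finset.single_le_sum (f := fun i => |a i x|) (fun _ _ => abs_nonneg _) hi).trans
      ((le_abs_self _).trans (hA x hx))
  calc |∑ i ∈ s, a i x * g i x| ≤ ∑ i ∈ s, |a i x| * |g i x| := by
        simpa only [abs_mul] using Finset.abs_sum_le_sum_abs (fun i => a i x * g i x) s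
    _ ≤ ∑ i ∈ s, A * |g i x| :=
        Finset.sum_le_sum fun i hi => mul_le_mul_of_nonneg_right (hai i hi) (abs_nonneg _)
    _ = A * ∑ i ∈ s, |g i x| := (Finset.mul_sum _ _ _).symm

/-- On `M = ℝ`, the ideal of smooth real-valued functions vanishing identically on the
interval `[0,1]` is not finitely generated as a `C^∞(ℝ)`-module: there is no finite family
`g₁, …, g_k` of smooth functions vanishing on `[0,1]` such that every smooth function
vanishing on `[0,1]` is of the form `Σᵢ aᵢ·gᵢ` with `aᵢ` smooth. -/
theorem stmt14 :
    ¬ ∃ (k : ℕ) (g : Fin k → ℝ → ℝ),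
      (∀ i, ContDiff ℝ (⊤ : ℕ∞) (g i)) ∧
      (∀ i, ∀ x ∈ Set.Icc (0 : ℝ) 1, g i x = 0) ∧
      (∀ f : ℝ → ℝ, ContDiff ℝ (⊤ : ℕ∞) f → (∀ x ∈ Set.Icc (0 : ℝ) 1, f x = 0) →
        ∃ a : Fin k → ℝ → ℝ, (∀ i, ContDiff ℝ (⊤ : ℕ∞) (a i)) ∧
          f = ∑ i, a i * g i) := by
  rintro ⟨k, g, hg, hg0, hgen⟩
  set m : ℝ → ℝ := fun y => expNegInvGlue (y - 1) + ∑ i, |g i y|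
  have hm : SuperpolynomialDecay atTop (fun n : ℕ => (2 : ℝ) ^ n) fun n => m (1 + 2⁻¹ ^ n) :=
    (superpolynomialDecay_two_pow_of_eqOn_zero (a := 0)
        (expNegInvGlue.contDiff.comp (contDiff_id.sub contDiff_const)) zero_lt_one
        fun y hy => expNegInvGlue.zero_of_nonpos (sub_nonpos.2 hy.2)).add <|
      .sum _ fun i _ => (superpolynomialDecay_two_pow_of_eqOn_zero (hg i) zero_lt_one
        (hg0 i)).trans_abs_le fun n => (abs_abs _).le
  obtain ⟨f, hf, hf0, hfm⟩ := exists_contDiff_eq_zero_Iic_and_le_apply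
    (c := fun n => 2 ^ n * m (1 + 2⁻¹ ^ n))
    (fun n => mul_nonneg (by positivity) (add_nonneg (expNegInvGlue.nonneg _)
      (Finset.sum_nonneg fun i _ => abs_nonneg _))) hm.param_mul 1
  obtain ⟨a, ha, hfa⟩ := hgen f hf fun y hy => hf0 y hy.2
  obtain ⟨A, hA⟩ := (isCompact_Icc (a := (1 : ℝ)) (b := 2)).exists_abs_sum_mul_le (a := a)
    Finset.univ (fun i _ => (ha i).continuous.continuousOn) g
  obtain ⟨n, hn⟩ := pow_unbounded_of_one_lt A one_lt_two
  have hx : 1 + 2⁻¹ ^ n ∈ Icc (1 : ℝ) 2 := by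
    simpa [one_add_one_eq_two] using add_two_inv_pow_mem_Icc 1 n
  set x : ℝ := 1 + 2⁻¹ ^ n
  have hfx : f x = ∑ i, a i x * g i x := by simp [hfa, Finset.sum_apply]
  have hm_gt : ∑ i, |g i x| < m x := lt_add_of_pos_left _ (expNegInvGlue.pos_of_pos (by simp [x]))
  have : 2 ^ n * m x < 2 ^ n * m x := calc
    2 ^ n * m x ≤ f x := hfm n
    _ ≤ A * ∑ i, |g i x| := (le_abs_self _).trans (hfx ▸ hA x hx)
    _ ≤ 2 ^ n * ∑ i, |g i x| :=
        mul_le_mul_of_nonneg_right hn.le (Finset.sum_nonneg fun i _ => abs_nonneg _)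
    _ < 2 ^ n * m x := by gcongr
  exact this.false
end

section
/- On ℝ², the C∞-module generated by ∂/∂x together with all vector fields φ(x)·∂/∂y, where φ ranges over smooth functions vanishing identically on the half-plane x ≤ 0, is closed under the Lie bracket of vector fields but is not locally finitely generated at the origin (hence is not a Hermann foliation). -/
/-!
The generators depend on `x` only and their `x`-derivatives are again generators, so the
derivative of a field of `V15` along any smooth field stays in `V15`; the bracket is a difference
of two such derivatives.

Along the `x`-axis the second components `hᵢ` of finitely many fields of `V15` are smooth and vanish
on `x ≤ 0`, hence are `o(xⁿ)` at `0⁺` for every `n`. Choosing `xₙ → 0⁺` with `Σᵢ |hᵢ(xₙ)|` tiny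
compared with `(xₙ / 4)ⁿ`, a series of bumps at the `xₙ` gives a smooth `ψ`, vanishing on `x ≤ 0`,
with `ψ(xₙ) > n · Σᵢ |hᵢ(xₙ)|`. The field `ψ(x) ∂/∂y` then cannot be a combination of the `gᵢ` with
coefficients bounded near the origin.
-/

/-- The generating vector fields on `ℝ²`: `∂/∂x` together with all fields `φ(x)·∂/∂y`
where `φ` is smooth and vanishes identically on the half-line `x ≤ 0`. -/
def gens15 : Set ((ℝ × ℝ) → (ℝ × ℝ)) :=
  {fun _ => ((1 : ℝ), (0 : ℝ))} ∪
    {X | ∃ φ : ℝ → ℝ, ContDiff ℝ (⊤ : ℕ∞) φ ∧ (∀ x ≤ (0 : ℝ), φ x = 0) ∧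
      X = fun p => ((0 : ℝ), φ p.1)}

/-- The `C^∞(ℝ²)`-module generated by `gens15`. -/
def V15 : Set ((ℝ × ℝ) → (ℝ × ℝ)) :=
  {X | ∃ (k : ℕ) (a : Fin k → (ℝ × ℝ) → ℝ) (g : Fin k → (ℝ × ℝ) → (ℝ × ℝ)),
    (∀ i, ContDiff ℝ (⊤ : ℕ∞) (a i)) ∧ (∀ i, g i ∈ gens15) ∧
    X = fun p => ∑ i, a i p • g i p}

/-- The Lie bracket of vector fields on `ℝ²` (viewed as smooth maps `ℝ² → ℝ²`). -/
noncomputable def vbracket15 (X Y : (ℝ × ℝ) → (ℝ × ℝ)) : (ℝ × ℝ) → (ℝ × ℝ) :=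
  fun p => fderiv ℝ Y p (X p) - fderiv ℝ X p (Y p)

open Set Filter Topology Asymptotics
open scoped ContDiff

lemma deriv_eq_zero_of_forall_le_eq_zero {E : Type*} [NormedAddCommGroup E] [NormedSpace ℝ E]
    {f : ℝ → E} (hf : Differentiable ℝ f) {a : ℝ} (h : ∀ x ≤ a, f x = 0) {x : ℝ} (hx : x ≤ a) :
    deriv f x = 0 :=
  (uniqueDiffOn_Iic x x self_mem_Iic).eq_deriv _ (hf x).hasDerivAt.hasDerivWithinAt <|
    (hasDerivWithinAt_const x _ (0 : E)).congr (fun y hy => h y (le_trans hy hx)) (h x hx)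

lemma mem_gens15_of_forall_le_eq_zero {φ : ℝ → ℝ} (hφ : ContDiff ℝ ∞ φ)
    (h : ∀ x ≤ (0 : ℝ), φ x = 0) : (fun p : ℝ × ℝ => ((0 : ℝ), φ p.1)) ∈ gens15 :=
  Or.inr ⟨φ, hφ, h, rfl⟩

lemma contDiff_of_mem_gens15 {g : ℝ × ℝ → ℝ × ℝ} (hg : g ∈ gens15) : ContDiff ℝ ∞ g := by
  rcases hg with rfl | ⟨φ, hφ, -, rfl⟩
  · exact contDiff_const
  · exact contDiff_const.prodMk (hφ.comp contDiff_fst)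

lemma snd_eq_zero_of_mem_gens15 {g : ℝ × ℝ → ℝ × ℝ} (hg : g ∈ gens15) {p : ℝ × ℝ}
    (hp : p.1 ≤ 0) : (g p).2 = 0 := by
  rcases hg with rfl | ⟨φ, -, hφ, rfl⟩
  · rfl
  · exact hφ p.1 hp

lemma exists_fderiv_eq_of_mem_gens15 {g : ℝ × ℝ → ℝ × ℝ} (hg : g ∈ gens15) :
    ∃ g' ∈ gens15, ∀ p v : ℝ × ℝ, fderiv ℝ g p v = v.1 • g' p := by
  rcases hg with rfl | ⟨φ, hφ, hφ0, rfl⟩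
  · refine ⟨_, mem_gens15_of_forall_le_eq_zero contDiff_const fun _ _ => rfl, fun p v => ?_⟩
    simp [Prod.ext_iff]
  · have hφ' : ContDiff ℝ ∞ (deriv φ) := (contDiff_infty_iff_deriv.mp hφ).2
    refine ⟨_, mem_gens15_of_forall_le_eq_zero hφ'
      fun x hx => deriv_eq_zero_of_forall_le_eq_zero (hφ.differentiable (by simp)) hφ0 hx,
      fun p v => ?_⟩
    have hd : HasFDerivAt (fun q : ℝ × ℝ => ((0 : ℝ), φ q.1))
        ((0 : ℝ × ℝ →L[ℝ] ℝ).prod (deriv φ p.1 • ContinuousLinearMap.fst ℝ ℝ ℝ)) p :=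
      (hasFDerivAt_const _ _).prodMk <|
        ((hφ.differentiable (by simp)) p.1).hasDerivAt.comp_hasFDerivAt p hasFDerivAt_fst
    simp [hd.fderiv, mul_comm]

lemma mem_V15_of_mem_gens15 {g : ℝ × ℝ → ℝ × ℝ} (hg : g ∈ gens15) : g ∈ V15 :=
  ⟨1, fun _ _ => 1, fun _ => g, fun _ => contDiff_const, fun _ => hg, by simp⟩

lemma add_mem_V15 {X Y : ℝ × ℝ → ℝ × ℝ} (hX : X ∈ V15) (hY : Y ∈ V15) :
    (fun p => X p + Y p) ∈ V15 := by
  obtain ⟨k, a, g, ha, hg, rfl⟩ := hX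
  obtain ⟨m, b, h, hb, hh, rfl⟩ := hY
  refine ⟨k + m, Fin.append a b, Fin.append g h, fun i => ?_, fun i => ?_, ?_⟩
  · cases i using Fin.addCases <;> simp [ha, hb]
  · cases i using Fin.addCases <;> simp [hg, hh]
  · simp [Fin.sum_univ_add]

lemma sub_mem_V15 {X Y : ℝ × ℝ → ℝ × ℝ} (hX : X ∈ V15) (hY : Y ∈ V15) :
    (fun p => X p - Y p) ∈ V15 := by
  obtain ⟨k, b, h, hb, hh, rfl⟩ := hY
  have hneg : (fun p => -∑ i, b i p • h i p) ∈ V15 :=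
    ⟨k, fun i => -b i, h, fun i => (hb i).neg, hh, by simp [neg_smul]⟩
  simpa only [sub_eq_add_neg] using add_mem_V15 hX hneg

lemma contDiff_of_mem_V15 {X : ℝ × ℝ → ℝ × ℝ} (hX : X ∈ V15) : ContDiff ℝ ∞ X := by
  obtain ⟨k, a, g, ha, hg, rfl⟩ := hX
  exact ContDiff.sum fun i _ => (ha i).smul (contDiff_of_mem_gens15 (hg i))

lemma snd_eq_zero_of_mem_V15 {X : ℝ × ℝ → ℝ × ℝ} (hX : X ∈ V15) {p : ℝ × ℝ}
    (hp : p.1 ≤ 0) : (X p).2 = 0 := by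
  obtain ⟨k, a, g, -, hg, rfl⟩ := hX
  simp [Prod.snd_sum, snd_eq_zero_of_mem_gens15 (hg _) hp]

lemma fderiv_apply_mem_V15 {X Z : ℝ × ℝ → ℝ × ℝ} (hX : X ∈ V15) (hZ : ContDiff ℝ ∞ Z) :
    (fun p => fderiv ℝ X p (Z p)) ∈ V15 := by
  obtain ⟨k, a, g, ha, hg, rfl⟩ := hX
  choose g' hg' hgg' using fun i => exists_fderiv_eq_of_mem_gens15 (hg i)
  have hderiv : ∀ p, HasFDerivAt (fun q => ∑ i, a i q • g i q)
      (∑ i, (a i p • fderiv ℝ (g i) p + (fderiv ℝ (a i) p).smulRight (g i p))) p := fun p =>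
    HasFDerivAt.fun_sum fun i _ => ((ha i).differentiable (by simp) p).hasFDerivAt.smul
      ((contDiff_of_mem_gens15 (hg i)).differentiable (by simp) p).hasFDerivAt
  have heq : (fun p => fderiv ℝ (fun q => ∑ i, a i q • g i q) p (Z p)) = fun p =>
      (∑ i, fderiv ℝ (a i) p (Z p) • g i p) + ∑ i, (a i p * (Z p).1) • g' i p := by
    ext1 p
    simp only [(hderiv p).fderiv, sum_apply, add_apply, smul_apply,
      ContinuousLinearMap.smulRight_apply, hgg', smul_smul, ← Finset.sum_add_distrib, add_comm]
  rw [heq]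
  refine add_mem_V15 ⟨k, _, g, fun i => ?_, hg, rfl⟩ ⟨k, _, g', fun i => ?_, hg', rfl⟩
  · exact ((ha i).fderiv_right (by exact_mod_cast le_top)).clm_apply hZ
  · exact (ha i).mul (contDiff_fst.comp hZ)

theorem vbracket15_mem_V15 {X Y : ℝ × ℝ → ℝ × ℝ} (hX : X ∈ V15) (hY : Y ∈ V15) :
    vbracket15 X Y ∈ V15 :=
  sub_mem_V15 (fderiv_apply_mem_V15 hY (contDiff_of_mem_V15 hX))
    (fderiv_apply_mem_V15 hX (contDiff_of_mem_V15 hY))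

theorem isLittleO_pow_of_forall_le_eq_zero {f : ℝ → ℝ} (hf : ContDiff ℝ ∞ f)
    (h : ∀ x ≤ (0 : ℝ), f x = 0) (m : ℕ) : f =o[𝓝[>] 0] (· ^ m) := by
  induction m generalizing f with
  | zero =>
    simp only [pow_zero, isLittleO_one_iff]
    simpa [h 0 le_rfl] using hf.continuous.tendsto 0 |>.mono_left nhdsWithin_le_nhds
  | succ m ih =>
    have hf' := ih (contDiff_infty_iff_deriv.mp hf).2
      fun x hx => deriv_eq_zero_of_forall_le_eq_zero (hf.differentiable (by simp)) h hx
    refine isLittleO_iff.2 fun ε hε => ?_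
    obtain ⟨u, hu, hsub⟩ := mem_nhdsGT_iff_exists_Ioo_subset.1 (hf'.def hε)
    filter_upwards [Ioo_mem_nhdsGT hu] with x hx
    obtain ⟨c, hc, hslope⟩ := exists_deriv_eq_slope f hx.1 hf.continuous.continuousOn
      (hf.differentiable (by simp)).differentiableOn
    have hbound : ‖deriv f c‖ ≤ ε * ‖c ^ m‖ := hsub ⟨hc.1, hc.2.trans hx.2⟩
    rw [hslope, h 0 le_rfl, sub_zero, sub_zero, norm_div] at hbound
    calc ‖f x‖ = ‖f x‖ / ‖x‖ * ‖x‖ := by rw [div_mul_cancel₀ _ (norm_pos_iff.2 hx.1.ne').ne']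
      _ ≤ ε * ‖c ^ m‖ * ‖x‖ := by gcongr
      _ ≤ ε * ‖x ^ m‖ * ‖x‖ := by
        gcongr
        simp only [norm_pow, Real.norm_eq_abs, abs_of_pos hc.1, abs_of_pos hx.1]
        exact pow_le_pow_left₀ hc.1.le hc.2.le m
      _ = ε * ‖x ^ (m + 1)‖ := by rw [pow_succ, norm_mul, mul_assoc]

lemma norm_iteratedFDeriv_mul_comp_affine_le {f : ℝ → ℝ} {m : ℕ} (hf : ContDiff ℝ m f) {M : ℝ}
    (hM : ∀ t, ‖iteratedFDeriv ℝ m f t‖ ≤ M) (c r x₀ t : ℝ) :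
    ‖iteratedFDeriv ℝ m (fun t => c * f (r * (t - x₀))) t‖ ≤ |c| * |r| ^ m * M := by
  have hM' : ‖iteratedDeriv m f (r * (t - x₀))‖ ≤ M := by
    simpa only [norm_iteratedFDeriv_eq_norm_iteratedDeriv] using hM (r * (t - x₀))
  rw [norm_iteratedFDeriv_eq_norm_iteratedDeriv, iteratedDeriv_const_mul_field,
    iteratedDeriv_comp_sub_const (f := fun z => f (r * z)),
    iteratedDeriv_comp_const_mul hf]
  simp only [norm_mul, norm_pow, Real.norm_eq_abs] at hM' ⊢
  rw [mul_assoc]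
  gcongr

lemma summable_div_four_pow_mul_two_div_pow {x : ℕ → ℝ} (hx0 : ∀ n, 0 < x n)
    (hx1 : ∀ n, x n ≤ 1) (m : ℕ) : Summable fun n => (x n / 4) ^ n * (2 / x n) ^ m := by
  refine Summable.of_norm_bounded_eventually_nat
    ((summable_geometric_of_lt_one (by norm_num) (by norm_num : (1 / 4 : ℝ) < 1)).mul_left
      (2 ^ m)) ?_
  filter_upwards [eventually_ge_atTop m] with n hn
  have hxn := hx0 n
  have hpow : x n ^ n / x n ^ m ≤ 1 :=
    (div_le_one (by positivity)).2 (pow_le_pow_of_le_one hxn.le (hx1 n) hn)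
  calc ‖(x n / 4) ^ n * (2 / x n) ^ m‖ = x n ^ n / x n ^ m * (2 ^ m * (1 / 4) ^ n) := by
        rw [Real.norm_of_nonneg (by positivity)]
        simp only [div_pow, one_pow]
        field_simp
    _ ≤ 2 ^ m * (1 / 4) ^ n := mul_le_of_le_one_left (by positivity) hpow

/-- A sum of bumps of height `(x n / 4) ^ n` and radius `x n / 2` centred at the points `x n`;
the height beats the `m`-th derivative of the rescaled bump, of size `(2 / x n) ^ m`, once
`n ≥ m`, which makes the series converge in every `C^m` norm. -/
theorem exists_contDiff_forall_le_eq_zero_pow_le {x : ℕ → ℝ} (hx0 : ∀ n, 0 < x n)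
    (hx1 : ∀ n, x n ≤ 1) :
    ∃ ψ : ℝ → ℝ, ContDiff ℝ ∞ ψ ∧ (∀ t ≤ (0 : ℝ), ψ t = 0) ∧ ∀ n, (x n / 4) ^ n ≤ ψ (x n) := by
  let B : ContDiffBump (0 : ℝ) := ⟨1 / 2, 1, by norm_num, by norm_num⟩
  have hB : ContDiff ℝ ∞ B := B.contDiff
  choose M hM using fun m => (hB.continuous_iteratedFDeriv (m := m) (by exact_mod_cast le_top)
    |>.bounded_above_of_compact_support (B.hasCompactSupport.iteratedFDeriv m))
  let f : ℕ → ℝ → ℝ := fun n t => (x n / 4) ^ n * B (2 / x n * (t - x n))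
  let v : ℕ → ℕ → ℝ := fun m n => (x n / 4) ^ n * (2 / x n) ^ m * M m
  have hfv : ∀ m n t, ‖iteratedFDeriv ℝ m (f n) t‖ ≤ v m n := fun m n t => by
    have := norm_iteratedFDeriv_mul_comp_affine_le
      (hB.of_le (by exact_mod_cast le_top)) (hM m) ((x n / 4) ^ n) (2 / x n) (x n) t
    have hxn := hx0 n
    rwa [abs_of_pos (by positivity), abs_of_pos (by positivity)] at this
  have hv : ∀ m, Summable (v m) := fun m =>
    (summable_div_four_pow_mul_two_div_pow hx0 hx1 m).mul_right (M m)
  have hfx : ∀ n, f n (x n) = (x n / 4) ^ n := fun n => by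
    simp [f, B.one_of_mem_closedBall (Metric.mem_closedBall_self B.rIn_pos.le)]
  have hf0 : ∀ n, ∀ t ≤ (0 : ℝ), f n t = 0 := fun n t ht => by
    have hxn := hx0 n
    have hfar : 2 / x n * (t - x n) ≤ -2 := by
      calc 2 / x n * (t - x n) ≤ 2 / x n * (-x n) := by gcongr; linarith
        _ = -2 := by field_simp
    have : B.rOut ≤ dist (2 / x n * (t - x n)) 0 := by
      rw [Real.dist_0_eq_abs, abs_of_neg (by linarith)]
      change (1 : ℝ) ≤ _
      linarith
    simp [f, B.zero_of_le_dist this]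
  have hf_nonneg : ∀ n t, 0 ≤ f n t := fun n t => by
    have := hx0 n
    exact mul_nonneg (by positivity) B.nonneg
  refine ⟨fun t => ∑' n, f n t, ?_, fun t ht => by simp [hf0 _ t ht], fun n => ?_⟩
  · have hfC : ∀ n, ContDiff ℝ ∞ (f n) := fun n =>
      contDiff_const.mul (hB.comp (contDiff_const.mul (contDiff_id.sub contDiff_const)))
    exact contDiff_tsum hfC (fun m _ => hv m) fun m n t _ => hfv m n t
  · have hsum : Summable fun l => f l (x n) :=
      (hv 0).of_norm_bounded fun l => by simpa using hfv 0 l (x n)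
    exact hfx n ▸ hsum.le_tsum n fun l _ => hf_nonneg l (x n)

theorem exists_contDiff_forall_le_eq_zero_gt_nat_mul {H : ℝ → ℝ}
    (hH : ∀ m : ℕ, H =o[𝓝[>] 0] (· ^ m)) :
    ∃ ψ : ℝ → ℝ, ContDiff ℝ ∞ ψ ∧ (∀ t ≤ (0 : ℝ), ψ t = 0) ∧
      ∃ x : ℕ → ℝ, Tendsto x atTop (𝓝 0) ∧ ∀ n : ℕ, n * |H (x n)| < ψ (x n) := by
  have hpt : ∀ n : ℕ, ∃ y ∈ Ioo (0 : ℝ) (1 / (n + 1)),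
      ‖H y‖ ≤ (1 / 4) ^ n / (n + 1) * ‖y ^ n‖ := fun n =>
    (Eventually.and (Ioo_mem_nhdsGT (by positivity : (0 : ℝ) < 1 / (n + 1)))
      ((hH n).def (by positivity))).exists
  choose x hx hHx using hpt
  have hx1 : ∀ n, x n ≤ 1 := fun n =>
    (hx n).2.le.trans (div_le_one_of_le₀ (by simp) (by positivity))
  obtain ⟨ψ, hψ, hψ0, hψx⟩ := exists_contDiff_forall_le_eq_zero_pow_le (fun n => (hx n).1) hx1
  refine ⟨ψ, hψ, hψ0, x, ?_, fun n => ?_⟩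
  · exact tendsto_of_tendsto_of_tendsto_of_le_of_le tendsto_const_nhds
      tendsto_one_div_add_atTop_nhds_zero_nat (fun n => (hx n).1.le) fun n => (hx n).2.le
  · have hxn := (hx n).1
    have hHn := hHx n
    rw [Real.norm_eq_abs, norm_pow, Real.norm_eq_abs, abs_of_pos hxn] at hHn
    calc (n : ℝ) * |H (x n)| ≤ n * ((1 / 4) ^ n / (n + 1) * x n ^ n) := by gcongr
      _ = n / (n + 1) * (x n / 4) ^ n := by rw [div_pow, div_pow, one_pow]; field_simp
      _ < (x n / 4) ^ n := mul_lt_of_lt_one_left (by positivity)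
          ((div_lt_one (by positivity)).2 (lt_add_one _))
      _ ≤ ψ (x n) := hψx n

lemma abs_sum_mul_le_sum_abs_mul_sum_abs {ι : Type*} (s : Finset ι) (a b : ι → ℝ) :
    |∑ i ∈ s, a i * b i| ≤ (∑ i ∈ s, |a i|) * ∑ i ∈ s, |b i| := by
  calc |∑ i ∈ s, a i * b i| ≤ ∑ i ∈ s, |a i| * |b i| := by
        simpa only [abs_mul] using Finset.abs_sum_le_sum_abs (fun i => a i * b i) s
    _ ≤ ∑ i ∈ s, |a i| * ∑ j ∈ s, |b j| := Finset.sum_le_sum fun i hi =>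
        mul_le_mul_of_nonneg_left
          (Finset.single_le_sum (f := fun j => |b j|) (fun j _ => abs_nonneg _) hi) (abs_nonneg _)
    _ = (∑ i ∈ s, |a i|) * ∑ j ∈ s, |b j| := (Finset.sum_mul _ _ _).symm

theorem not_locallyFinitelyGenerated_V15 :
    ¬ ∃ U ∈ 𝓝 ((0, 0) : ℝ × ℝ), ∃ (k : ℕ) (g : Fin k → ℝ × ℝ → ℝ × ℝ),
      (∀ i, g i ∈ V15) ∧ ∀ X ∈ V15, ∃ a : Fin k → ℝ × ℝ → ℝ,
        (∀ i, ContDiffOn ℝ ∞ (a i) U) ∧ ∀ p ∈ U, X p = ∑ i, a i p • g i p := by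
  rintro ⟨U, hU, k, g, hgV, hgen⟩
  let h : Fin k → ℝ → ℝ := fun i t => (g i (t, 0)).2
  let H : ℝ → ℝ := fun t => ∑ i, |h i t|
  have hflat : ∀ m : ℕ, H =o[𝓝[>] 0] (· ^ m) := fun m =>
    IsLittleO.fun_sum fun i _ => IsLittleO.abs_left <| isLittleO_pow_of_forall_le_eq_zero
      (contDiff_snd.comp ((contDiff_of_mem_V15 (hgV i)).comp (contDiff_id.prodMk contDiff_const)))
      (fun t ht => snd_eq_zero_of_mem_V15 (hgV i) ht) m
  obtain ⟨ψ, hψ, hψ0, x, hx, hψx⟩ := exists_contDiff_forall_le_eq_zero_gt_nat_mul hflat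
  obtain ⟨a, ha, hXa⟩ :=
    hgen _ (mem_V15_of_mem_gens15 (mem_gens15_of_forall_le_eq_zero hψ hψ0))
  let A : ℝ × ℝ → ℝ := fun p => ∑ i, |a i p|
  have hp : Tendsto (fun n => (x n, (0 : ℝ))) atTop (𝓝 (0, 0)) :=
    hx.prodMk_nhds tendsto_const_nhds
  have hA : Tendsto (fun n => A (x n, 0)) atTop (𝓝 (A (0, 0))) :=
    tendsto_finsetSum _ fun i _ => (((ha i).continuousOn.continuousAt hU).tendsto.comp hp).abs
  have hAn : ∀ᶠ n : ℕ in atTop, A (x n, 0) ≤ n :=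
    (hA.eventually (gt_mem_nhds (lt_add_one (A (0, 0))))).and
      (tendsto_natCast_atTop_atTop.eventually_ge_atTop (A (0, 0) + 1)) |>.mono
      fun n hn => hn.1.le.trans hn.2
  obtain ⟨n, hnU, hnA⟩ := ((hp.eventually hU).and hAn).exists
  have hψn : ψ (x n) = ∑ i, a i (x n, 0) * h i (x n) := by
    simpa [Prod.snd_sum] using congrArg Prod.snd (hXa _ hnU)
  refine (hψx n).not_ge ?_
  calc ψ (x n) ≤ |∑ i, a i (x n, 0) * h i (x n)| := hψn ▸ le_abs_self _
    _ ≤ A (x n, 0) * H (x n) := abs_sum_mul_le_sum_abs_mul_sum_abs _ _ _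
    _ ≤ n * |H (x n)| := by
        rw [abs_of_nonneg (Finset.sum_nonneg fun j _ => abs_nonneg _)]
        gcongr

/-- On `ℝ²`, the `C^∞`-module generated by `∂/∂x` together with all vector fields
`φ(x)·∂/∂y`, `φ` smooth vanishing identically on `x ≤ 0`, is closed under the Lie bracket
of vector fields, but it is not locally finitely generated at the origin (hence it is not
a Hermann foliation). -/
theorem stmt15 :
    (∀ X ∈ V15, ∀ Y ∈ V15, vbracket15 X Y ∈ V15) ∧
    ¬ ∃ U ∈ nhds ((0, 0) : ℝ × ℝ), ∃ (k : ℕ) (g : Fin k → (ℝ × ℝ) → (ℝ × ℝ)),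
      (∀ i, g i ∈ V15) ∧
      ∀ X ∈ V15, ∃ a : Fin k → (ℝ × ℝ) → ℝ,
        (∀ i, ContDiffOn ℝ (⊤ : ℕ∞) (a i) U) ∧
        ∀ p ∈ U, X p = ∑ i, a i p • g i p :=
  ⟨fun _ hX _ hY => vbracket15_mem_V15 hX hY, not_locallyFinitelyGenerated_V15⟩
end

section
/- The smooth distribution 𝒟 on ℝ² given by 𝒟_{(x,y)} = T_{(x,y)}ℝ² for x > 0 and 𝒟_{(x,y)} = span(∂/∂x) for x ≤ 0 is involutive but not integrable: there is no partition of ℝ² into immersed connected submanifolds whose tangent spaces equal 𝒟 at every point. -/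
/-- The smooth singular distribution on `ℝ²`: the full tangent plane for `x > 0`, the
line spanned by `∂/∂x` for `x ≤ 0`. -/
noncomputable def D16 : ℝ × ℝ → Submodule ℝ (ℝ × ℝ) := fun p =>
  if 0 < p.1 then ⊤ else Submodule.span ℝ {((1 : ℝ), (0 : ℝ))}

/-- The Lie bracket of vector fields on `ℝ²` (viewed as smooth maps `ℝ² → ℝ²`). -/
noncomputable def vbracket16 (X Y : (ℝ × ℝ) → (ℝ × ℝ)) : (ℝ × ℝ) → (ℝ × ℝ) :=
  fun p => fderiv ℝ Y p (X p) - fderiv ℝ X p (Y p)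

/-- The tangent set of a subset `L ⊆ ℝ²` at a point `p`: the velocities at `p` of smooth
curves through `p` staying in `L` near time `0`.  For an immersed submanifold this is the
tangent space. -/
def tangentSet16 (L : Set (ℝ × ℝ)) (p : ℝ × ℝ) : Set (ℝ × ℝ) :=
  {v | ∃ γ : ℝ → ℝ × ℝ, ContDiff ℝ (⊤ : ℕ∞) γ ∧ γ 0 = p ∧
    (∀ᶠ t in nhds (0 : ℝ), γ t ∈ L) ∧ deriv γ 0 = v}

/-!
Involutivity: where `x ≤ 0`, the second components of two fields valued in `𝒟` vanish on the
closed half-plane `x ≤ 0`, so their `∂/∂x`-derivatives vanish there and the bracket is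
horizontal.

Non-integrability: through each point of the open half-plane `H = {x > 0}` its leaf contains a
nearly vertical and a nearly horizontal arc, and a vertical and a horizontal arc of length `a`
through points at distance `≤ a/2` cross, so these points lie in the same leaf. A Baire category
argument over the lengths `1/(n+1)` then shows that every point of `H` is interior to its leaf,
and as `H` is connected it lies in a single leaf. The leaf of the origin is tangent to `∂/∂x`,
so it meets `H` and therefore contains it; then the parabola `t ↦ (t², t)` lies in that leaf
and `∂/∂y` is tangent to it at the origin, which is impossible.
-/

open Set Metric Filter Topology

lemma mem_D16_iff {p v : ℝ × ℝ} : v ∈ D16 p ↔ (p.1 ≤ 0 → v.2 = 0) := by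
  unfold D16
  split_ifs with hp
  · simp [hp.not_ge]
  · simp only [Submodule.mem_span_singleton, not_lt.1 hp, forall_const]
    refine ⟨?_, fun h => ⟨v.1, Prod.ext (by simp) (by simp [h])⟩⟩
    rintro ⟨a, rfl⟩
    simp

lemma HasDerivAt.eq_zero_of_eqOn_Iic {f : ℝ → ℝ} {f' a x : ℝ} (hf : HasDerivAt f f' x)
    (hzero : EqOn f 0 (Iic a)) (hx : x ≤ a) : f' = 0 :=
  (uniqueDiffOn_Iic a x hx).eq_deriv _ hf.hasDerivWithinAt
    ((hasDerivWithinAt_const x _ 0).congr hzero (hzero hx))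

lemma snd_fderiv_apply_eq_zero {Z : ℝ × ℝ → ℝ × ℝ} (hZ : Differentiable ℝ Z)
    (hZD : ∀ p, Z p ∈ D16 p) {q v : ℝ × ℝ} (hq : q.1 ≤ 0) (hv : v.2 = 0) :
    (fderiv ℝ Z q v).2 = 0 := by
  have hline : HasDerivAt (fun x : ℝ => (Z (x, q.2)).2) (fderiv ℝ Z q (1, 0)).2 q.1 := by
    have := (hZ q).hasFDerivAt.comp_hasDerivAt q.1
      ((hasDerivAt_id q.1).prodMk (hasDerivAt_const q.1 q.2))
    exact (ContinuousLinearMap.snd ℝ ℝ ℝ).hasFDerivAt.comp_hasDerivAt q.1 this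
  have hx : (fderiv ℝ Z q (1, 0)).2 = 0 :=
    hline.eq_zero_of_eqOn_Iic (fun x hx => mem_D16_iff.1 (hZD (x, q.2)) hx) hq
  have hv' : v = v.1 • ((1 : ℝ), (0 : ℝ)) := Prod.ext (by simp) (by simp [hv])
  rw [hv', map_smul, Prod.smul_snd, hx, smul_zero]

theorem vbracket16_mem_D16 {X Y : ℝ × ℝ → ℝ × ℝ} (hX : Differentiable ℝ X)
    (hY : Differentiable ℝ Y) (hXD : ∀ p, X p ∈ D16 p) (hYD : ∀ p, Y p ∈ D16 p) (p : ℝ × ℝ) :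
    vbracket16 X Y p ∈ D16 p := by
  refine mem_D16_iff.2 fun hp => ?_
  rw [vbracket16, Prod.snd_sub, snd_fderiv_apply_eq_zero hY hYD hp (mem_D16_iff.1 (hXD p) hp),
    snd_fderiv_apply_eq_zero hX hXD hp (mem_D16_iff.1 (hYD p) hp), sub_zero]

/-- `L` contains a curve `γ` through `p = γ 0` along which `s ↦ γ s - s • v` is
`1/4`-Lipschitz on `[-a, a]`. -/
def HasArc (L : Set (ℝ × ℝ)) (p v : ℝ × ℝ) (a : ℝ) : Prop :=
  ∃ γ : ℝ → ℝ × ℝ, γ 0 = p ∧ MapsTo γ (closedBall 0 a) L ∧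
    ApproximatesLinearOn γ ((1 : ℝ →L[ℝ] ℝ).smulRight v) (closedBall 0 a) (1 / 4)

lemma HasArc.mono {L : Set (ℝ × ℝ)} {p v : ℝ × ℝ} {a b : ℝ} (h : HasArc L p v a)
    (hba : b ≤ a) : HasArc L p v b := by
  obtain ⟨γ, hγ0, hγL, hγ⟩ := h
  exact ⟨γ, hγ0, hγL.mono_left (closedBall_subset_closedBall hba),
    hγ.mono_set (closedBall_subset_closedBall hba)⟩

lemma exists_hasArc_of_mem_tangentSet16 {L : Set (ℝ × ℝ)} {p v : ℝ × ℝ}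
    (h : v ∈ tangentSet16 L p) : ∃ a > 0, HasArc L p v a := by
  obtain ⟨γ, hγ, rfl, hL, rfl⟩ := h
  obtain ⟨s, hs, hγs⟩ := (hγ.hasStrictDerivAt (x := 0) (by simp)).hasStrictFDerivAt
    |>.approximates_deriv_on_nhds (c := 1 / 4) (Or.inr (by norm_num))
  obtain ⟨a, ha, hball⟩ := nhds_basis_closedBall.mem_iff.1 (inter_mem hs hL)
  exact ⟨a, ha, γ, rfl, fun t ht => (hball ht).2, hγs.mono_set fun t ht => (hball ht).1⟩

lemma HasArc.exists_mem_dist_le {L : Set (ℝ × ℝ)} {p v : ℝ × ℝ} {a : ℝ} (h : HasArc L p v a)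
    {t : ℝ} (ht : |t| ≤ a) : ∃ u ∈ L, dist u (p + t • v) ≤ |t| / 4 := by
  obtain ⟨γ, hγ0, hγL, hγ⟩ := h
  have ht' : t ∈ closedBall (0 : ℝ) a := by simpa using ht
  have h0 : (0 : ℝ) ∈ closedBall (0 : ℝ) a := mem_closedBall_self ((abs_nonneg t).trans ht)
  refine ⟨γ t, hγL ht', ?_⟩
  have := hγ _ ht' _ h0
  rw [hγ0] at this
  simpa [dist_eq_norm, sub_sub, div_eq_inv_mul] using this

/-- `(s, t) ↦ γ s - β t` is `1/2`-close to the isometry `(s, t) ↦ (-t, s)`, so by the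
surjectivity part of the inverse function theorem it vanishes on the square `[-a, a]²`. -/
lemma HasArc.inter_nonempty {L L' : Set (ℝ × ℝ)} {p q : ℝ × ℝ} {a : ℝ}
    (h : HasArc L p (0, 1) a) (h' : HasArc L' q (1, 0) a) (hpq : dist p q ≤ a / 2) :
    (L ∩ L').Nonempty := by
  obtain ⟨γ, hγ0, hγL, hγ⟩ := h
  obtain ⟨β, hβ0, hβL, hβ⟩ := h'
  set f' : ℝ × ℝ →L[ℝ] ℝ × ℝ :=
    (-ContinuousLinearMap.snd ℝ ℝ ℝ).prod (ContinuousLinearMap.fst ℝ ℝ ℝ)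
  have hF :
      ApproximatesLinearOn (fun x : ℝ × ℝ => γ x.1 - β x.2) f' (closedBall 0 a) (1 / 2) := by
    intro x hx y hy
    rw [← closedBall_prod_same] at hx hy
    have h1 := hγ _ hx.1 _ hy.1
    have h2 := hβ _ hx.2 _ hy.2
    simp only [ContinuousLinearMap.smulRight_apply, one_apply_eq_self, Prod.smul_mk,
      smul_eq_mul, mul_zero, mul_one, NNReal.coe_div, NNReal.coe_one, NNReal.coe_ofNat,
      Real.norm_eq_abs] at h1 h2 ⊢
    have hfst : |x.1 - y.1| ≤ ‖x - y‖ := norm_fst_le (x - y)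
    have hsnd : |x.2 - y.2| ≤ ‖x - y‖ := norm_snd_le (x - y)
    calc _ = ‖(γ x.1 - γ y.1 - (0, x.1 - y.1)) - (β x.2 - β y.2 - (x.2 - y.2, 0))‖ := by
          congr 1
          ext <;> simp [f'] <;> ring
      _ ≤ 1 / 4 * |x.1 - y.1| + 1 / 4 * |x.2 - y.2| := norm_sub_le_of_le h1 h2
      _ ≤ 1 / 2 * ‖x - y‖ := by linarith
  let f'inv : f'.NonlinearRightInverse :=
    { toFun := fun y => (y.2, -y.1)
      nnnorm := 1
      bound' := fun y => by simp [Prod.norm_def, max_comm]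
      right_inv' := fun y => by simp [f'] }
  have hsurj := hF.surjOn_closedBall_of_nonlinearRightInverse f'inv (b := 0) (ε := a)
    (by linarith [dist_nonneg (x := p) (y := q)]) subset_rfl
  have h0 : (0 : ℝ × ℝ) ∈ closedBall (γ 0 - β 0) (a / 2) := by
    rwa [mem_closedBall, dist_comm, dist_zero_right, hγ0, hβ0, ← dist_eq_norm]
  have hr : ((f'inv.nnnorm : ℝ)⁻¹ - ((1 / 2 : NNReal) : ℝ)) * a = a / 2 := by
    norm_num [f'inv]
    ring
  obtain ⟨x, hx, hx0⟩ := hsurj (by rw [hr]; exact h0)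
  rw [← closedBall_prod_same] at hx
  exact ⟨γ x.1, hγL hx.1, sub_eq_zero.1 hx0 ▸ hβL hx.2⟩

section Classes

variable {X : Type*} [TopologicalSpace X] (r : Setoid X)

lemma isOpen_setOf_classes_mem_nhds : IsOpen {p : X | {x | r x p} ∈ 𝓝 p} := by
  refine isOpen_iff_mem_nhds.2 fun p hp => ?_
  filter_upwards [Filter.Eventually.eventually_nhds hp] with y hy
  have hyp : y ∈ {x | r x p} := mem_of_mem_nhds hy
  filter_upwards [hy] with x hx using r.trans' hx (r.symm' hyp)

lemma IsPreconnected.rel_of_classes_mem_nhds {S : Set X} (hS : IsPreconnected S)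
    (h : ∀ p ∈ S, {x | r x p} ∈ 𝓝 p) {x y : X} (hx : x ∈ S) (hy : y ∈ S) : r x y :=
  hS.induction₂' (fun x y => r x y)
    (fun p hp => by
      filter_upwards [nhdsWithin_le_nhds (h p hp)] with y hy using ⟨r.symm' hy, hy⟩)
    (fun _ _ _ _ _ _ => r.trans') hx hy

end Classes

lemma IsLocallyClosed.exists_ball_inter_subset_closure {X : Type*} [MetricSpace X]
    [LocallyCompactSpace X] {F : Set X} (hF : IsLocallyClosed F) (hne : F.Nonempty)
    {A : ℕ → Set X} (hA : F ⊆ ⋃ n, A n) :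
    ∃ n, ∃ z ∈ F, ∃ ε > 0, ball z ε ∩ F ⊆ closure (A n) := by
  have := hF.locallyCompactSpace
  have : Nonempty F := hne.to_subtype
  obtain ⟨n, ⟨z, hz⟩, hzn⟩ := nonempty_interior_of_iUnion_of_closed
    (f := fun n => closure (Subtype.val ⁻¹' A n : Set F)) (fun _ => isClosed_closure)
    (eq_univ_of_forall fun p => by
      obtain ⟨n, hn⟩ := mem_iUnion.1 (hA p.2)
      exact mem_iUnion.2 ⟨n, subset_closure hn⟩)
  obtain ⟨u, hu, hus⟩ := (mem_nhds_subtype F ⟨z, hz⟩ _).1 (mem_interior_iff_mem_nhds.1 hzn)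
  obtain ⟨ε, hε, hεu⟩ := Metric.mem_nhds_iff.1 hu
  refine ⟨n, z, hz, ε, hε, fun w ⟨hwε, hwF⟩ => ?_⟩
  have hw : (⟨w, hwF⟩ : F) ∈ closure (Subtype.val ⁻¹' A n) := hus (hεu hwε)
  exact closure_mono (image_preimage_subset _ _) (closure_subtype.1 hw)

section Leaves

variable (r : Setoid (ℝ × ℝ))

def FullTangentsOnRight : Prop :=
  ∀ p : ℝ × ℝ, 0 < p.1 → ∀ v, v ∈ tangentSet16 {x | r x p} p

def crossPoints (a : ℝ) : Set (ℝ × ℝ) :=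
  {q | HasArc {x | r x q} q (0, 1) a ∧ HasArc {x | r x q} q (1, 0) a}

variable {r}

lemma rel_of_hasArc {p q : ℝ × ℝ} {a : ℝ} (hp : HasArc {x | r x p} p (0, 1) a)
    (hq : HasArc {x | r x q} q (1, 0) a) (hpq : dist p q ≤ a / 2) : r p q := by
  obtain ⟨u, hup, huq⟩ := hp.inter_nonempty hq hpq
  exact r.trans' (r.symm' hup) huq

lemma exists_mem_crossPoints (hfull : FullTangentsOnRight r) {p : ℝ × ℝ} (hp : 0 < p.1) :
    ∃ n : ℕ, p ∈ crossPoints r (1 / (n + 1)) := by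
  obtain ⟨a, ha, hv⟩ := exists_hasArc_of_mem_tangentSet16 (hfull p hp (0, 1))
  obtain ⟨b, hb, hh⟩ := exists_hasArc_of_mem_tangentSet16 (hfull p hp (1, 0))
  obtain ⟨n, hn⟩ := exists_nat_one_div_lt (lt_min ha hb)
  exact ⟨n, hv.mono (hn.le.trans (min_le_left a b)), hh.mono (hn.le.trans (min_le_right a b))⟩

lemma exists_rel_mem_crossPoints (hfull : FullTangentsOnRight r) {a ε : ℝ} (ha : 0 < a)
    (hε : 0 < ε) {z : ℝ × ℝ} (hz : 0 < z.1)
    (hzA : z ∈ closure (crossPoints r a)) : ∃ q ∈ crossPoints r a, dist z q < ε ∧ r z q := by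
  obtain ⟨b, hb, hh⟩ := exists_hasArc_of_mem_tangentSet16 (hfull z hz (1, 0))
  obtain ⟨q, hq, hzq⟩ := Metric.mem_closure_iff.1 hzA (min ε (min a b / 2))
    (lt_min hε (half_pos (lt_min ha hb)))
  refine ⟨q, hq, hzq.trans_le (min_le_left _ _), r.symm' ?_⟩
  exact rel_of_hasArc (hq.1.mono (min_le_left a b)) (hh.mono (min_le_right a b))
    (by rw [dist_comm]; exact hzq.le.trans (min_le_right _ _))

lemma rel_of_mem_closure_crossPoints (hfull : FullTangentsOnRight r) {a : ℝ} {z z' : ℝ × ℝ}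
    (hz : 0 < z.1) (hz' : 0 < z'.1) (hzA : z ∈ closure (crossPoints r a))
    (hz'A : z' ∈ closure (crossPoints r a)) (hzz' : dist z z' < a / 4) : r z z' := by
  have ha : 0 < a := by linarith [dist_nonneg (x := z) (y := z')]
  have ha8 : 0 < a / 8 := by positivity
  obtain ⟨q, hq, hzq, hrq⟩ := exists_rel_mem_crossPoints hfull ha ha8 hz hzA
  obtain ⟨q', hq', hzq', hrq'⟩ := exists_rel_mem_crossPoints hfull ha ha8 hz' hz'A
  have hqq' : dist q q' ≤ a / 2 := by
    linarith [dist_triangle4 q z z' q', dist_comm q z, hzq, hzq']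
  exact r.trans' hrq (r.trans' (rel_of_hasArc hq.1 hq'.2 hqq') (r.symm' hrq'))

lemma exists_rel_mem_ball (hfull : FullTangentsOnRight r) {w x : ℝ × ℝ} (hw : 0 < w.1)
    (hwx : w ≠ x) : ∃ u ∈ ball x (dist w x), r u w := by
  set R := dist w x
  have hR : 0 < R := dist_pos.2 hwx
  obtain ⟨a, ha, harc⟩ := exists_hasArc_of_mem_tangentSet16 (hfull w hw (R⁻¹ • (x - w)))
  set t := min a R
  have ht : 0 < t := lt_min ha hR
  obtain ⟨u, hu, hut⟩ :=
    harc.exists_mem_dist_le (t := t) ((abs_of_pos ht).trans_le (min_le_left _ _))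
  have hmid : dist (w + t • R⁻¹ • (x - w)) x = R - t := by
    have : w + t • R⁻¹ • (x - w) - x = (1 - t / R) • (w - x) := by
      rw [smul_smul]; module
    have hpos : 0 ≤ 1 - t / R := by rw [sub_nonneg, div_le_one hR]; exact min_le_right _ _
    rw [dist_eq_norm, this, norm_smul, Real.norm_of_nonneg hpos, ← dist_eq_norm]
    change (1 - t / R) * R = R - t
    field_simp
  rw [abs_of_pos ht] at hut
  refine ⟨u, mem_ball.2 ?_, hu⟩
  linarith [dist_triangle u (w + t • R⁻¹ • (x - w)) x]

/-- If `x` is not related to `c`, take a point `w ∉ U = interior {y | r y x}` nearest to `x`.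
The arc of the class of `w` aimed at `x` enters `U`, so `r w x`; as `w ∉ U`, `w` is not
interior to its class, so `r w c`. -/
lemma ball_subset_classes (hfull : FullTangentsOnRight r)
    {c : ℝ × ℝ} {ρ : ℝ} (hH : ∀ w ∈ ball c ρ, 0 < w.1)
    (hK : ∀ w ∈ ball c ρ, {x | r x w} ∉ 𝓝 w → r w c) : ball c (ρ / 2) ⊆ {x | r x c} := by
  intro x hx
  by_contra hxc
  have hxρ : x ∈ ball c ρ := ball_subset_ball (by linarith [pos_of_mem_ball hx]) hx
  set U := interior {y | r y x}
  have hxU : x ∈ U := mem_interior_iff_mem_nhds.2 (not_not.1 fun h => hxc (hK x hxρ h))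
  have hcU : c ∉ U := fun h => hxc (r.symm' (interior_subset h : c ∈ {y | r y x}))
  obtain ⟨w, hwU, hw⟩ := isOpen_interior.isClosed_compl.exists_infDist_eq_dist ⟨c, hcU⟩ x
  have hwc : w ∈ ball c ρ := by
    have hxw : dist x w ≤ dist x c := hw ▸ infDist_le_dist_of_mem (show c ∈ Uᶜ from hcU)
    rw [mem_ball] at hx ⊢
    linarith [dist_triangle w x c, dist_comm x w, dist_comm x c]
  have hwx' : w ≠ x := fun h => hwU (by rwa [h])
  obtain ⟨u, hu, huw⟩ := exists_rel_mem_ball hfull (hH w hwc) hwx'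
  rw [dist_comm, ← hw] at hu
  have hux : u ∈ {y | r y x} := interior_subset (ball_infDist_compl_subset hu)
  have hwx : r w x := r.trans' (r.symm' huw) hux
  refine hxc (r.trans' (r.symm' hwx) (hK w hwc fun hwG => hwU ?_))
  exact mem_interior_iff_mem_nhds.2 (mem_of_superset hwG fun y hy => r.trans' hy hwx)

/-- Baire's theorem, applied to the points of `{x > 0}` not interior to their class, yields
such a point `z₁` near which these points are limits of points of `crossPoints r a` for one `a`,
hence all related to `z₁`; `ball_subset_classes` then makes `z₁` interior to its class. -/
lemma classes_mem_nhds_of_pos (hfull : FullTangentsOnRight r) {z : ℝ × ℝ} (hz : 0 < z.1) :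
    {x | r x z} ∈ 𝓝 z := by
  by_contra hzG
  set F := {p : ℝ × ℝ | 0 < p.1} ∩ {p | {x | r x p} ∈ 𝓝 p}ᶜ
  have hF : IsLocallyClosed F :=
    (isOpen_lt continuous_const continuous_fst).isLocallyClosed.inter
      (isOpen_setOf_classes_mem_nhds r).isClosed_compl.isLocallyClosed
  obtain ⟨n, z₁, ⟨hz₁, hz₁G⟩, ε, hε, hεF⟩ := hF.exists_ball_inter_subset_closure ⟨z, hz, hzG⟩
    fun p hp => mem_iUnion.2 (exists_mem_crossPoints hfull hp.1)
  set a : ℝ := 1 / (n + 1)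
  set ρ := min ε (min (a / 4) z₁.1)
  have hH : ∀ w ∈ ball z₁ ρ, 0 < w.1 := fun w hw => by
    have h1 : |w.1 - z₁.1| < z₁.1 :=
      (norm_fst_le (w - z₁)).trans_lt ((mem_ball_iff_norm.1 hw).trans_le
        ((min_le_right _ _).trans (min_le_right _ _)))
    linarith [neg_abs_le (w.1 - z₁.1)]
  have hK : ∀ w ∈ ball z₁ ρ, {x | r x w} ∉ 𝓝 w → r w z₁ := fun w hw hwG => by
    have hwε : w ∈ ball z₁ ε := ball_subset_ball (min_le_left _ _) hw
    refine rel_of_mem_closure_crossPoints hfull (hH w hw) hz₁ (hεF ⟨hwε, hH w hw, hwG⟩)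
      (hεF ⟨mem_ball_self hε, hz₁, hz₁G⟩) ?_
    exact (mem_ball.1 hw).trans_le ((min_le_right _ _).trans (min_le_left _ _))
  have hρ : 0 < ρ := lt_min hε (lt_min (by positivity) hz₁)
  exact hz₁G
    (mem_of_superset (ball_mem_nhds z₁ (half_pos hρ)) (ball_subset_classes hfull hH hK))

lemma rel_of_pos (hfull : FullTangentsOnRight r) {x y : ℝ × ℝ} (hx : 0 < x.1) (hy : 0 < y.1) :
    r x y :=
  (convex_halfSpace_gt (LinearMap.fst ℝ ℝ ℝ).isLinear 0).isPreconnected.rel_of_classes_mem_nhds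
    r (fun _ hp => classes_mem_nhds_of_pos hfull hp) hx hy

end Leaves

theorem exists_tangentSet16_ne_D16 (r : Setoid (ℝ × ℝ)) :
    ∃ p, tangentSet16 {x | r x p} p ≠ (D16 p : Set (ℝ × ℝ)) := by
  by_contra! h
  have hfull : FullTangentsOnRight r := fun p hp v => by
    simp [h, D16, hp]
  have horiz : ((1 : ℝ), (0 : ℝ)) ∈ tangentSet16 {x | r x 0} 0 := by
    rw [h, SetLike.mem_coe, mem_D16_iff]; simp
  obtain ⟨a, ha, harc⟩ := exists_hasArc_of_mem_tangentSet16 horiz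
  obtain ⟨u, hu, hua⟩ := harc.exists_mem_dist_le (t := a) (abs_of_pos ha).le
  have hu1 : 0 < u.1 := by
    have := (norm_fst_le (u - (0 + a • ((1 : ℝ), (0 : ℝ))))).trans (dist_eq_norm u _ ▸ hua)
    simp only [Prod.smul_mk, smul_eq_mul, mul_one, mul_zero, zero_add, Prod.fst_sub,
      Real.norm_eq_abs, abs_of_pos ha] at this
    linarith [neg_abs_le (u.1 - a)]
  -- the class of `0` meets, hence contains, `{x > 0}`, so it contains the parabola
  have vert : ((0 : ℝ), (1 : ℝ)) ∈ tangentSet16 {x | r x 0} 0 := by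
    refine ⟨fun t => (t ^ 2, t), (contDiff_id.pow 2).prodMk contDiff_id, by simp,
      Eventually.of_forall fun t => ?_, ?_⟩
    · rcases eq_or_ne t 0 with rfl | ht
      · exact (show ((0 : ℝ) ^ 2, (0 : ℝ)) = 0 by simp) ▸ r.refl' 0
      · exact r.trans' (rel_of_pos hfull (by positivity) hu1) hu
    · exact (((hasDerivAt_pow 2 0).prodMk (hasDerivAt_id 0)).deriv).trans (by simp)
  rw [h, SetLike.mem_coe, mem_D16_iff] at vert
  simp at vert

/-- The distribution `D16` (full plane for `x > 0`, the `∂/∂x`-line for `x ≤ 0`) is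
involutive — the bracket of any two smooth vector fields valued in it is again valued in
it — but it is not integrable: there is no partition of `ℝ²` into connected immersed
leaves whose tangent spaces equal `D16` at every point. -/
theorem stmt16 :
    (∀ X Y : ℝ × ℝ → ℝ × ℝ, ContDiff ℝ (⊤ : ℕ∞) X → ContDiff ℝ (⊤ : ℕ∞) Y →
      (∀ p, X p ∈ D16 p) → (∀ p, Y p ∈ D16 p) →
      ∀ p, vbracket16 X Y p ∈ D16 p) ∧
    ¬ ∃ ℒ : Set (Set (ℝ × ℝ)), Setoid.IsPartition ℒ ∧
      ∀ L ∈ ℒ, IsConnected L ∧ ∀ p ∈ L, tangentSet16 L p = (D16 p : Set (ℝ × ℝ)) := by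
  refine ⟨fun X Y hX hY => vbracket16_mem_D16 (hX.differentiable (by simp))
    (hY.differentiable (by simp)), ?_⟩
  rintro ⟨ℒ, hℒ, hleaf⟩
  set r := Setoid.mkClasses ℒ hℒ.2
  obtain ⟨p, hp⟩ := exists_tangentSet16_ne_D16 r
  have hmem : {x | r x p} ∈ ℒ := Setoid.classes_mkClasses ℒ hℒ ▸ r.mem_classes p
  exact hp ((hleaf _ hmem).2 p (r.refl' p))
end

section
/- Let h be a strictly positive smooth function on an open set U>0 ⊆ ℝ², and suppose there exist smooth functions f₁,…,f_p on an open set U ⊇ U>0 with h^{1/4} = Σ_{i=1}^p f_i h_i on U>0, where h = Σ h_i². Then by Cauchy–Schwarz h^{1/4} ≤ h^{1/2}·(Σ f_i²)^{1/2}, hence 1/h^{1/4} ≤ (Σ f_i²)^{1/2} on U>0; consequently if h tends to 0 at a boundary point of U>0 interior to U, the functions f_i cannot all be continuous there, a contradiction showing no such decomposition exists. -/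
/-!
Cauchy–Schwarz gives `h^{1/4} = Σ fᵢ hᵢ ≤ h^{1/2} (Σ fᵢ²)^{1/2}`, i.e. `h^{-1/4} ≤ (Σ fᵢ²)^{1/2}`
wherever `h > 0`. At a point where `h → 0` the left side blows up, while the right side stays
bounded by continuity of the `fᵢ`.
-/

open Filter Topology

theorem rpow_quarter_le_rpow_half_mul_sqrt {ι : Type*} [Fintype ι] {f g : ι → ℝ}
    (h : (∑ i, g i ^ 2) ^ (1 / 4 : ℝ) = ∑ i, f i * g i) :
    (∑ i, g i ^ 2) ^ (1 / 4 : ℝ) ≤ (∑ i, g i ^ 2) ^ (1 / 2 : ℝ) * √(∑ i, f i ^ 2) := by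
  calc (∑ i, g i ^ 2) ^ (1 / 4 : ℝ) = ∑ i, f i * g i := h
    _ ≤ √(∑ i, f i ^ 2) * √(∑ i, g i ^ 2) := Real.sum_mul_le_sqrt_mul_sqrt _ f g
    _ = (∑ i, g i ^ 2) ^ (1 / 2 : ℝ) * √(∑ i, f i ^ 2) := by
      rw [mul_comm, Real.sqrt_eq_rpow]

theorem one_div_rpow_quarter_le_of_rpow_quarter_le {a c : ℝ} (ha : 0 < a)
    (h : a ^ (1 / 4 : ℝ) ≤ a ^ (1 / 2 : ℝ) * c) : 1 / a ^ (1 / 4 : ℝ) ≤ c := by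
  have hq : 0 < a ^ (1 / 4 : ℝ) := Real.rpow_pos_of_pos ha _
  have hhalf : a ^ (1 / 2 : ℝ) = a ^ (1 / 4 : ℝ) * a ^ (1 / 4 : ℝ) := by
    rw [← Real.rpow_add ha]; norm_num
  rw [hhalf, mul_assoc] at h
  rw [div_le_iff₀ hq, mul_comm]
  exact le_of_mul_le_mul_left (by simpa using h) hq

theorem not_tendsto_zero_of_one_div_rpow_le {α : Type*} {l : Filter α} [l.NeBot]
    {g F : α → ℝ} {r c : ℝ} (hr : 0 < r) (hF : Tendsto F l (𝓝 c))
    (hpos : ∀ᶠ x in l, 0 < g x) (hle : ∀ᶠ x in l, 1 / g x ^ r ≤ F x) :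
    ¬ Tendsto g l (𝓝 0) := by
  intro hg
  have hg' : Tendsto g l (𝓝[>] 0) := tendsto_nhdsWithin_iff.mpr ⟨hg, hpos⟩
  have hblowup : Tendsto (fun x => 1 / g x ^ r) l atTop := by
    refine ((tendsto_rpow_neg_nhdsGT_zero (neg_lt_zero.mpr hr)).comp hg').congr' ?_
    filter_upwards [hpos] with x hx
    simp [Real.rpow_neg hx.le]
  exact not_tendsto_atTop_of_tendsto_nhds hF (tendsto_atTop_mono' l hle hblowup)

theorem stmt17_general (U : Set (ℝ × ℝ)) (p : ℕ)
    (hc f : Fin p → (ℝ × ℝ) → ℝ)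
    (hde : ∀ x ∈ {q ∈ U | 0 < q.1},
      (∑ i, (hc i x) ^ 2) ^ ((1 : ℝ) / 4) = ∑ i, f i x * hc i x)
    (hpos : ∀ x ∈ {q ∈ U | 0 < q.1}, 0 < ∑ i, (hc i x) ^ 2)
    (hfc : ∀ i, ContinuousOn (f i) U) :
    (∀ x ∈ {q ∈ U | 0 < q.1},
      (∑ i, (hc i x) ^ 2) ^ ((1 : ℝ) / 4)
        ≤ (∑ i, (hc i x) ^ 2) ^ ((1 : ℝ) / 2) * Real.sqrt (∑ i, (f i x) ^ 2)) ∧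
    (∀ x ∈ {q ∈ U | 0 < q.1},
      1 / (∑ i, (hc i x) ^ 2) ^ ((1 : ℝ) / 4) ≤ Real.sqrt (∑ i, (f i x) ^ 2)) ∧
    (∀ z ∈ U, z ∈ closure {q ∈ U | 0 < q.1} →
      Filter.Tendsto (fun x => ∑ i, (hc i x) ^ 2)
        (nhdsWithin z {q ∈ U | 0 < q.1}) (nhds 0) →
      False) := by
  set Upos := {q ∈ U | 0 < q.1}
  have cauchy_schwarz : ∀ x ∈ Upos, (∑ i, hc i x ^ 2) ^ (1 / 4 : ℝ)
      ≤ (∑ i, hc i x ^ 2) ^ (1 / 2 : ℝ) * √(∑ i, f i x ^ 2) :=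
    fun x hx => rpow_quarter_le_rpow_half_mul_sqrt (hde x hx)
  have lower_bound : ∀ x ∈ Upos, 1 / (∑ i, hc i x ^ 2) ^ (1 / 4 : ℝ) ≤ √(∑ i, f i x ^ 2) :=
    fun x hx => one_div_rpow_quarter_le_of_rpow_quarter_le (hpos x hx) (cauchy_schwarz x hx)
  refine ⟨cauchy_schwarz, lower_bound, fun z hzU hz_closure htends => ?_⟩
  have : (𝓝[Upos] z).NeBot := mem_closure_iff_nhdsWithin_neBot.mp hz_closure
  have hF : Tendsto (fun x => √(∑ i, f i x ^ 2)) (𝓝[Upos] z) (𝓝 √(∑ i, f i z ^ 2)) :=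
    (((continuousOn_finsetSum _ fun i _ => (hfc i).pow 2).sqrt z hzU).mono
      (Set.sep_subset _ _)).tendsto
  exact not_tendsto_zero_of_one_div_rpow_le (by norm_num) hF
    (eventually_mem_nhdsWithin.mono hpos) (eventually_mem_nhdsWithin.mono lower_bound) htends

/-- The Cauchy–Schwarz argument.  Let `U ⊆ ℝ²` be open, `U₊ = {q ∈ U | 0 < q.1}`,
let `h = Σᵢ hᵢ²` be strictly positive on `U₊`, and suppose there are continuous (e.g.
smooth) functions `f₁, …, f_p` on `U` with `h^{1/4} = Σᵢ fᵢ·hᵢ` on `U₊`.  Then by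
Cauchy–Schwarz `h^{1/4} ≤ h^{1/2}·(Σ fᵢ²)^{1/2}` on `U₊`, hence
`1/h^{1/4} ≤ (Σ fᵢ²)^{1/2}` on `U₊`; consequently, if `h` tends to `0` at a point of the
closure of `U₊` lying in `U`, the (continuous) functions `fᵢ` would have to blow up there
— a contradiction, so no such situation can occur (`False`). -/
theorem stmt17 (U : Set (ℝ × ℝ)) (hU : IsOpen U) (p : ℕ)
    (hc f : Fin p → (ℝ × ℝ) → ℝ)
    (hde : ∀ x ∈ {q ∈ U | 0 < q.1},
      (∑ i, (hc i x) ^ 2) ^ ((1 : ℝ) / 4) = ∑ i, f i x * hc i x)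
    (hpos : ∀ x ∈ {q ∈ U | 0 < q.1}, 0 < ∑ i, (hc i x) ^ 2)
    (hfc : ∀ i, ContinuousOn (f i) U) :
    (∀ x ∈ {q ∈ U | 0 < q.1},
      (∑ i, (hc i x) ^ 2) ^ ((1 : ℝ) / 4)
        ≤ (∑ i, (hc i x) ^ 2) ^ ((1 : ℝ) / 2) * Real.sqrt (∑ i, (f i x) ^ 2)) ∧
    (∀ x ∈ {q ∈ U | 0 < q.1},
      1 / (∑ i, (hc i x) ^ 2) ^ ((1 : ℝ) / 4) ≤ Real.sqrt (∑ i, (f i x) ^ 2)) ∧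
    (∀ z ∈ U, z ∈ closure {q ∈ U | 0 < q.1} →
      Filter.Tendsto (fun x => ∑ i, (hc i x) ^ 2)
        (nhdsWithin z {q ∈ U | 0 < q.1}) (nhds 0) →
      False) :=
  stmt17_general U p hc f hde hpos hfc
end
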